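/- Let (A_i)_{i∈I} be unital associative ℂ-algebras, let (X_i)_{i∈I} be nonzero complex vector spaces, and let Ψ_i : A_i →ₐ[ℂ] Module.End ℂ X_i be injective unital ℂ-algebra homomorphisms (i.e. each X_i is a faithful unital A_i-module). Then the induced ℂ-algebra homomorphism ⨂_{i∈I} A_i → Module.End ℂ (⨂_{i∈I} X_i), determined by sending ⊗a to the endomorphism with (⊗a)·(⊗x) = ⊗(Ψ_i(a_i)(x_i)), is injective. In particular, ⨂_{i∈I} X_i is a faithful module over ⨂_{i∈I} A_i. -/

import Mathlib

/-
Write `t = ∑ₖ μₖ ⊗ fₖ` with `Θ t = 0`. On an infinite tensor product the right test functionals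
are `z ↦ ∏ᵢ ψᵢ (zᵢ)`, the product being taken as `0` unless all but finitely many factors are `1`;
since `Θ t = 0`, every such functional with `ψᵢ = φᵢ (Ψᵢ (·) xᵢ)` kills `t`.
Fix a term `f₀` with no zero coordinate. Because `ℂ` is infinite, the `ψᵢ` can be chosen with
`ψᵢ (f₀ᵢ) = 1` and `ψᵢ (fₖᵢ) ≠ 1` whenever `fₖᵢ ≠ f₀ᵢ`: this kills every term differing from `f₀`
in infinitely many coordinates, and leaves the remaining terms, which differ from `f₀` only on a
finite set `E`, tested by ordinary finite products over `E`. Expanding one coordinate of `E` at a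
time in a basis shows that these terms sum to zero, and induction on the number of terms finishes.
-/

open scoped TensorProduct

open Function Module PiTensorProduct

section FinprodOrZero

variable {ι M : Type*} [CommMonoidWithZero M]

/- Unlike `finprod`, which is `1` on functions of infinite multiplicative support, this is `0`
there: only with this convention is `finprodOrZero (fun i => ψ i (v i))` multilinear in `v`. -/
open Classical in
noncomputable def finprodOrZero (g : ι → M) : M :=
  if (mulSupport g).Finite then ∏ᶠ i, g i else 0

theorem finprodOrZero_of_infinite {g : ι → M} (hg : (mulSupport g).Infinite) :
    finprodOrZero g = 0 :=
  if_neg hg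

theorem finprodOrZero_eq_prod {g : ι → M} {s : Finset ι} (hs : ∀ i ∉ s, g i = 1) :
    finprodOrZero g = ∏ i ∈ s, g i := by
  have hsupp : mulSupport g ⊆ s := fun i hi => by_contra fun his => hi (hs i his)
  rw [finprodOrZero, if_pos (s.finite_toSet.subset hsupp),
    finprod_eq_prod_of_mulSupport_subset g hsupp]

theorem finite_mulSupport_update_iff [DecidableEq ι] (g : ι → M) (j : ι) (c : M) :
    (mulSupport (update g j c)).Finite ↔ (mulSupport g).Finite := by
  classical
  rw [mulSupport_update_eq_ite]
  split_ifs
  · exact ⟨fun h => by simpa using h.insert j, fun h => h.sdiff⟩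
  · exact Set.finite_insert

theorem finprodOrZero_update [DecidableEq ι] (g : ι → M) (j : ι) (c : M) :
    finprodOrZero (update g j c) = c * finprodOrZero (update g j 1) := by
  by_cases hg : (mulSupport g).Finite
  · have hc := (finite_mulSupport_update_iff g j c).2 hg
    have h1 := (finite_mulSupport_update_iff g j 1).2 hg
    rw [finprodOrZero, finprodOrZero, if_pos hc, if_pos h1, ← mul_finprod_cond_ne j hc,
      ← mul_finprod_cond_ne j h1, update_self, update_self, one_mul]
    congr 1
    refine finprod_congr fun i => finprod_congr fun hi => ?_
    rw [update_of_ne hi, update_of_ne hi]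
  · rw [finprodOrZero_of_infinite (mt (finite_mulSupport_update_iff g j c).1 hg),
      finprodOrZero_of_infinite (mt (finite_mulSupport_update_iff g j 1).1 hg), mul_zero]

end FinprodOrZero

section Field

variable {K : Type*} [Field K]

section ProdDual

variable {ι : Type*} {V : ι → Type*} [∀ i, AddCommGroup (V i)] [∀ i, Module K (V i)]

noncomputable def prodDual (ψ : ∀ i, Dual K (V i)) : MultilinearMap K V K where
  toFun v := finprodOrZero fun i => ψ i (v i)
  map_update_add' v j x y := by
    simp only [funext (apply_update (fun i => ψ i) v j _), map_add]
    rw [finprodOrZero_update _ j (_ + _), add_mul, ← finprodOrZero_update, ← finprodOrZero_update]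
  map_update_smul' v j c x := by
    simp only [funext (apply_update (fun i => ψ i) v j _), map_smul, smul_eq_mul]
    rw [finprodOrZero_update _ j (_ * _), mul_assoc, ← finprodOrZero_update]

@[simp]
theorem prodDual_apply (ψ : ∀ i, Dual K (V i)) (v : ∀ i, V i) :
    prodDual ψ v = finprodOrZero fun i => ψ i (v i) :=
  rfl

end ProdDual

section SeparatesFinsets

variable {V : Type*} [AddCommGroup V] [Module K V]

def SeparatesFinsets (S : Set (Dual K V)) : Prop :=
  (∀ c : K, ∀ ψ ∈ S, c • ψ ∈ S) ∧ ∀ s : Finset V, ∃ ψ ∈ S, ∀ v ∈ s, v ≠ 0 → ψ v ≠ 0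

variable {S : Set (Dual K V)}

theorem SeparatesFinsets.nonempty (hS : SeparatesFinsets S) : S.Nonempty :=
  let ⟨ψ, hψ, _⟩ := hS.2 ∅
  ⟨ψ, hψ⟩

theorem SeparatesFinsets.eq_zero_of_forall_apply_eq_zero (hS : SeparatesFinsets S) {v : V}
    (hv : ∀ ψ ∈ S, ψ v = 0) : v = 0 := by
  obtain ⟨ψ, hψ, hψv⟩ := hS.2 {v}
  by_contra h
  exact hψv v (Finset.mem_singleton_self v) h (hv ψ hψ)

theorem SeparatesFinsets.exists_apply_eq_one {κ : Type*} (hS : SeparatesFinsets S) {u : V}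
    (hu : u ≠ 0) (F : Finset κ) (v : κ → V) :
    ∃ ψ ∈ S, ψ u = 1 ∧ ∀ k ∈ F, v k ≠ u → ψ (v k) ≠ 1 := by
  classical
  obtain ⟨ψ, hψ, hψs⟩ := hS.2 (insert u (F.image fun k => v k - u))
  have hψu : ψ u ≠ 0 := hψs u (Finset.mem_insert_self _ _) hu
  refine ⟨(ψ u)⁻¹ • ψ, hS.1 _ ψ hψ, inv_mul_cancel₀ hψu, fun k hk hvu h => ?_⟩
  have hne := hψs (v k - u) (Finset.mem_insert_of_mem (Finset.mem_image_of_mem _ hk))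
    (sub_ne_zero.2 hvu)
  rw [LinearMap.smul_apply, smul_eq_mul, inv_mul_eq_one₀ hψu] at h
  exact hne (by rw [map_sub, h, sub_self])

end SeparatesFinsets

theorem Module.Basis.sum_repr_of_support_subset {η W : Type*} [AddCommGroup W] [Module K W]
    (b : Basis η K W) {v : W} {T : Finset η} (hT : (b.repr v).support ⊆ T) :
    ∑ β ∈ T, b.repr v β • b β = v := by
  conv_rhs => rw [← b.linearCombination_repr v]
  rw [Finsupp.linearCombination_apply, Finsupp.sum_of_support_subset _ hT _ (by simp)]

section Separation

variable {ι : Type*} {V : ι → Type*} [∀ i, AddCommGroup (V i)] [∀ i, Module K (V i)]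
  {S : ∀ i, Set (Dual K (V i))} {κ : Type*}

theorem tprod_eq_sum_update_basis [DecidableEq ι] {η : Type*} (f : ∀ i, V i) (j : ι)
    (b : Basis η K (V j)) {T : Finset η} (hT : (b.repr (f j)).support ⊆ T) :
    tprod K f = ∑ β ∈ T, b.repr (f j) β • tprod K (update f j (b β)) := by
  conv_lhs => rw [← update_eq_self j f, ← b.sum_repr_of_support_subset hT]
  simp only [MultilinearMap.map_update_sum, MultilinearMap.map_update_smul]

theorem sum_mul_repr_mul_prod_eq_zero [DecidableEq ι] {η : Type*} {j : ι}
    (hSj : SeparatesFinsets (S j)) (F : Finset κ) (μ : κ → K) (f : κ → ∀ i, V i) {E : Finset ι}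
    (hj : j ∉ E) (b : Basis η K (V j)) {T : Finset η}
    (hT : ∀ k ∈ F, (b.repr (f k j)).support ⊆ T)
    (h : ∀ ψ : ∀ i, Dual K (V i), (∀ i, ψ i ∈ S i) →
      ∑ k ∈ F, μ k * ∏ i ∈ insert j E, ψ i (f k i) = 0)
    {ψ : ∀ i, Dual K (V i)} (hψ : ∀ i, ψ i ∈ S i) :
    ∀ β ∈ T, ∑ k ∈ F, μ k * b.repr (f k j) β * ∏ i ∈ E, ψ i (f k i) = 0 := by
  refine linearIndependent_iff'.1 b.linearIndependent T _ ?_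
  refine hSj.eq_zero_of_forall_apply_eq_zero fun χ hχ => ?_
  have hψχ : ∀ i, update ψ j χ i ∈ S i := by
    intro i
    rcases eq_or_ne i j with rfl | hij
    · simpa using hχ
    · simpa [update_of_ne hij] using hψ i
  rw [← h _ hψχ, map_sum]
  simp only [map_smul, smul_eq_mul, Finset.sum_mul]
  rw [Finset.sum_comm]
  refine Finset.sum_congr rfl fun k hk => ?_
  have hprod : ∏ i ∈ E, update ψ j χ i (f k i) = ∏ i ∈ E, ψ i (f k i) :=
    Finset.prod_congr rfl fun i hi => by rw [update_of_ne (ne_of_mem_of_not_mem hi hj)]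
  have hχf : χ (f k j) = ∑ β ∈ T, b.repr (f k j) β * χ (b β) := by
    conv_lhs => rw [← b.sum_repr_of_support_subset (hT k hk)]
    simp only [map_sum, map_smul, smul_eq_mul]
  rw [Finset.prod_insert hj, update_self, hprod, hχf, Finset.sum_mul, Finset.mul_sum]
  exact Finset.sum_congr rfl fun _ _ => by ring

theorem sum_smul_tprod_eq_zero_of_forall_prod_eq_zero (hS : ∀ i, SeparatesFinsets (S i))
    (F : Finset κ) (E : Finset ι) (w : ∀ i, V i) (μ : κ → K) (f : κ → ∀ i, V i)
    (hfw : ∀ k ∈ F, ∀ i ∉ E, f k i = w i)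
    (h : ∀ ψ : ∀ i, Dual K (V i), (∀ i, ψ i ∈ S i) → ∑ k ∈ F, μ k * ∏ i ∈ E, ψ i (f k i) = 0) :
    ∑ k ∈ F, μ k • tprod K (f k) = 0 := by
  classical
  induction E using Finset.induction_on generalizing w μ f with
  | empty =>
    have hSne := fun i => (hS i).nonempty
    have hf : ∀ k ∈ F, f k = w := fun k hk => funext fun i => hfw k hk i (Finset.notMem_empty i)
    have hμ : ∑ k ∈ F, μ k = 0 := by
      simpa using h (fun i => (hSne i).some) fun i => (hSne i).some_mem
    rw [Finset.sum_congr rfl fun k hk => by rw [hf k hk], ← Finset.sum_smul, hμ, zero_smul]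
  | insert j E hj ih =>
    -- Expanding the `j`-th coordinates in a basis, each basis vector contributes a family of the
    -- same kind with `j` removed from `E`.
    let b := Basis.ofVectorSpace K (V j)
    let T := F.sup fun k => (b.repr (f k j)).support
    have hT : ∀ k ∈ F, (b.repr (f k j)).support ⊆ T := fun k hk =>
      Finset.le_sup (f := fun k => (b.repr (f k j)).support) hk
    calc ∑ k ∈ F, μ k • tprod K (f k)
        = ∑ β ∈ T, ∑ k ∈ F, (μ k * b.repr (f k j) β) • tprod K (update (f k) j (b β)) := by
          simp only [mul_smul]
          rw [Finset.sum_comm]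
          refine Finset.sum_congr rfl fun k hk => ?_
          rw [tprod_eq_sum_update_basis (f k) j b (hT k hk), Finset.smul_sum]
      _ = 0 := by
          refine Finset.sum_eq_zero fun β hβ =>
            ih (update w j (b β)) _ _ (fun k hk i hi => ?_) fun ψ hψ => ?_
          · rcases eq_or_ne i j with rfl | hij
            · simp
            · simp only [update_of_ne hij]
              exact hfw k hk i (by simpa [hij] using hi)
          · rw [← sum_mul_repr_mul_prod_eq_zero (hS j) F μ f hj b hT h hψ β hβ]
            refine Finset.sum_congr rfl fun k _ => congrArg _ (Finset.prod_congr rfl fun i hi => ?_)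
            rw [update_of_ne (ne_of_mem_of_not_mem hi hj)]

theorem exists_mem_subset_sum_smul_tprod_eq_zero (hS : ∀ i, SeparatesFinsets (S i))
    (F : Finset κ) (μ : κ → K) (f : κ → ∀ i, V i)
    (h : ∀ ψ : ∀ i, Dual K (V i), (∀ i, ψ i ∈ S i) →
      ∑ k ∈ F, μ k * finprodOrZero (fun i => ψ i (f k i)) = 0)
    {k₀ : κ} (hk₀ : k₀ ∈ F) :
    ∃ G ⊆ F, k₀ ∈ G ∧ ∑ k ∈ G, μ k • tprod K (f k) = 0 := by
  classical
  by_cases hzero : ∃ i, f k₀ i = 0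
  · obtain ⟨i, hi⟩ := hzero
    exact ⟨{k₀}, by simpa using hk₀, Finset.mem_singleton_self k₀, by
      simp [MultilinearMap.map_coord_zero _ i hi]⟩
  push Not at hzero
  let D : κ → Set ι := fun k => {i | f k i ≠ f k₀ i}
  let G := F.filter fun k => (D k).Finite
  have hE : (⋃ k ∈ G, D k).Finite :=
    G.finite_toSet.biUnion fun k hk => (Finset.mem_filter.1 hk).2
  let E := hE.toFinset
  have hGE : ∀ k ∈ G, ∀ i ∉ E, f k i = f k₀ i := fun k hk i hi => by
    by_contra hne
    exact hi (hE.mem_toFinset.2 (Set.mem_biUnion hk hne))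
  choose ψ₀ hψ₀S hψ₀1 hψ₀ne using
    fun i => (hS i).exists_apply_eq_one (hzero i) F fun k => f k i
  refine ⟨G, Finset.filter_subset _ _, Finset.mem_filter.2 ⟨hk₀, by simp [D]⟩, ?_⟩
  refine sum_smul_tprod_eq_zero_of_forall_prod_eq_zero hS G E (f k₀) μ f hGE fun ψ hψ => ?_
  have hψ' : ∀ i, E.piecewise ψ ψ₀ i ∈ S i := fun i => by
    by_cases hi : i ∈ E <;> simp [hi, hψ i, hψ₀S i]
  have hbad : ∀ k ∈ F, k ∉ G → finprodOrZero (fun i => E.piecewise ψ ψ₀ i (f k i)) = 0 := by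
    intro k hk hkG
    have hD : (D k).Infinite := fun hfin => hkG (Finset.mem_filter.2 ⟨hk, hfin⟩)
    refine finprodOrZero_of_infinite (Set.Infinite.mono (fun i hi => ?_) (hD.sdiff E.finite_toSet))
    rw [mem_mulSupport, Finset.piecewise_eq_of_notMem _ _ _ hi.2]
    exact hψ₀ne i k hk hi.1
  have hgood : ∀ k ∈ G,
      finprodOrZero (fun i => E.piecewise ψ ψ₀ i (f k i)) = ∏ i ∈ E, ψ i (f k i) := by
    intro k hk
    rw [finprodOrZero_eq_prod fun i hi => by
      rw [Finset.piecewise_eq_of_notMem _ _ _ hi, hGE k hk i hi, hψ₀1]]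
    exact Finset.prod_congr rfl fun i hi => by rw [Finset.piecewise_eq_of_mem _ _ _ hi]
  calc ∑ k ∈ G, μ k * ∏ i ∈ E, ψ i (f k i)
      = ∑ k ∈ G, μ k * finprodOrZero (fun i => E.piecewise ψ ψ₀ i (f k i)) :=
        Finset.sum_congr rfl fun k hk => by rw [hgood k hk]
    _ = ∑ k ∈ F, μ k * finprodOrZero (fun i => E.piecewise ψ ψ₀ i (f k i)) :=
        Finset.sum_filter_of_ne fun k hk hne => by
          by_contra hkG
          exact hne (by rw [hbad k hk fun hG => hkG (Finset.mem_filter.1 hG).2, mul_zero])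
    _ = 0 := h _ hψ'

theorem eq_zero_of_forall_lift_prodDual_eq_zero (hS : ∀ i, SeparatesFinsets (S i))
    {t : ⨂[K] i, V i}
    (ht : ∀ ψ : ∀ i, Dual K (V i), (∀ i, ψ i ∈ S i) → lift (prodDual ψ) t = 0) : t = 0 := by
  classical
  obtain ⟨c, rfl⟩ := Finsupp.mem_span_range_iff_exists_finsupp.1
    (span_tprod_eq_top (R := K) (s := V) ▸ Submodule.mem_top (x := t))
  rw [Finsupp.sum] at ht ⊢
  suffices ∀ F : Finset (∀ i, V i), (∀ ψ : ∀ i, Dual K (V i), (∀ i, ψ i ∈ S i) →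
      lift (prodDual ψ) (∑ f ∈ F, c f • tprod K f) = 0) → ∑ f ∈ F, c f • tprod K f = 0 from
    this _ ht
  intro F
  induction F using Finset.strongInduction with
  | H F ih =>
    intro ht
    rcases F.eq_empty_or_nonempty with rfl | ⟨f₀, hf₀⟩
    · exact Finset.sum_empty
    have hF : ∀ ψ : ∀ i, Dual K (V i), (∀ i, ψ i ∈ S i) →
        ∑ f ∈ F, c f * finprodOrZero (fun i => ψ i (f i)) = 0 := fun ψ hψ => by
      simpa using ht ψ hψ
    obtain ⟨G, hGF, hf₀G, hG⟩ := exists_mem_subset_sum_smul_tprod_eq_zero hS F c id hF hf₀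
    simp only [id] at hG
    rw [← Finset.sum_sdiff hGF, hG, add_zero] at ht ⊢
    exact ih _ (Finset.sdiff_ssubset hGF ⟨f₀, hf₀G⟩) ht

end Separation

section Faithful

variable [Infinite K] {M N : Type*} [AddCommGroup M] [Module K M] [AddCommGroup N] [Module K N]

theorem exists_forall_apply_ne_zero (s : Finset (M →ₗ[K] N)) (hs : 0 ∉ s) :
    ∃ x, ∀ T ∈ s, T x ≠ 0 := by
  classical
  have hker : ⊤ ∉ s.image LinearMap.ker := by
    simp only [Finset.mem_image, not_exists, not_and]
    intro T hT hker
    exact hs (LinearMap.ker_eq_top.1 hker ▸ hT)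
  obtain ⟨x, hx⟩ :=
    (Set.ne_univ_iff_exists_notMem _).1 (Subspace.biUnion_ne_univ_of_top_notMem hker)
  refine ⟨x, fun T hT hTx => hx ?_⟩
  simp only [Finset.mem_image, Set.mem_iUnion, SetLike.mem_coe, exists_prop]
  exact ⟨_, ⟨T, hT, rfl⟩, hTx⟩

theorem separatesFinsets_range_comp_applyₗ {A : Type*} [AddCommGroup A] [Module K A]
    (Ψ : A →ₗ[K] M →ₗ[K] N) (hΨ : Injective Ψ) :
    SeparatesFinsets (Set.range fun p : M × Dual K N => p.2 ∘ₗ LinearMap.applyₗ p.1 ∘ₗ Ψ) := by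
  classical
  refine ⟨?_, fun s => ?_⟩
  · rintro c _ ⟨⟨x, φ⟩, rfl⟩
    exact ⟨(x, c • φ), LinearMap.smul_comp _ _ _⟩
  obtain ⟨x, hx⟩ :=
    exists_forall_apply_ne_zero ((s.filter (· ≠ 0)).image Ψ) (by simp [map_eq_zero_iff Ψ hΨ])
  have hx' : ∀ a ∈ s, a ≠ 0 → Ψ a x ≠ 0 := fun a ha ha0 =>
    hx _ (Finset.mem_image_of_mem _ (Finset.mem_filter.2 ⟨ha, ha0⟩))
  obtain ⟨φ, hφ⟩ := exists_forall_apply_ne_zero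
    ((s.filter (· ≠ 0)).image fun a => Dual.eval K N (Ψ a x))
    (by simpa [Module.eval_apply_eq_zero_iff] using hx')
  refine ⟨_, ⟨(x, φ), rfl⟩, fun a ha ha0 => ?_⟩
  simpa using hφ _ (Finset.mem_image_of_mem _ (Finset.mem_filter.2 ⟨ha, ha0⟩))

end Faithful

theorem lift_prodDual_comp_applyₗ {ι : Type*} {A M N : ι → Type*}
    [∀ i, AddCommGroup (A i)] [∀ i, Module K (A i)] [∀ i, AddCommGroup (M i)]
    [∀ i, Module K (M i)] [∀ i, AddCommGroup (N i)] [∀ i, Module K (N i)]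
    (Ψ : ∀ i, A i →ₗ[K] M i →ₗ[K] N i)
    (Θ : (⨂[K] i, A i) →ₗ[K] (⨂[K] i, M i) →ₗ[K] ⨂[K] i, N i)
    (hΘ : ∀ a x, Θ (tprod K a) (tprod K x) = tprod K fun i => Ψ i (a i) (x i))
    (φ : ∀ i, Dual K (N i)) (x : ∀ i, M i) (t : ⨂[K] i, A i) :
    lift (prodDual fun i => φ i ∘ₗ LinearMap.applyₗ (x i) ∘ₗ Ψ i) t =
      lift (prodDual φ) (Θ t (tprod K x)) := by
  induction t using PiTensorProduct.induction_on with
  | smul_tprod r a => simp [hΘ]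
  | add t₁ t₂ h₁ h₂ => simp [h₁, h₂]

end Field

theorem piTensorProduct_faithful_module_general {I : Type*}
    (A : I → Type*) (X : I → Type*)
    [∀ i, Ring (A i)] [∀ i, Algebra ℂ (A i)]
    [∀ i, AddCommGroup (X i)] [∀ i, Module ℂ (X i)]
    (Ψ : ∀ i, A i →ₐ[ℂ] Module.End ℂ (X i)) (hΨ : ∀ i, Function.Injective (Ψ i))
    (Θ : (⨂[ℂ] i, A i) →ₐ[ℂ] Module.End ℂ (⨂[ℂ] i, X i))
    (hΘ : ∀ (a : ∀ i, A i) (x : ∀ i, X i),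
      Θ (PiTensorProduct.tprod ℂ a) (PiTensorProduct.tprod ℂ x) =
        PiTensorProduct.tprod ℂ (fun i => Ψ i (a i) (x i))) :
    Function.Injective Θ := by
  refine (injective_iff_map_eq_zero Θ).2 fun t ht => ?_
  refine eq_zero_of_forall_lift_prodDual_eq_zero
    (fun i => separatesFinsets_range_comp_applyₗ (Ψ i).toLinearMap (hΨ i)) fun ψ hψ => ?_
  choose p hp using hψ
  obtain rfl : ψ = fun i => (p i).2 ∘ₗ LinearMap.applyₗ (p i).1 ∘ₗ (Ψ i).toLinearMap :=
    funext fun i => (hp i).symm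
  rw [lift_prodDual_comp_applyₗ (fun i => (Ψ i).toLinearMap) Θ.toLinearMap hΘ,
    AlgHom.toLinearMap_apply, ht, LinearMap.zero_apply, map_zero]

/-- If `X_i` is a faithful unital module over the unital `ℂ`-algebra `A_i` for every `i`
(witnessed by injective algebra homomorphisms `Ψ_i : A_i → End(X_i)`), then
`⨂_{i∈I} X_i` is a faithful module over `⨂_{i∈I} A_i`: the induced algebra homomorphism
`⨂_{i∈I} A_i → End(⨂_{i∈I} X_i)` is injective. -/
theorem piTensorProduct_faithful_module {I : Type*} [Infinite I]
    (A : I → Type*) (X : I → Type*)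
    [∀ i, Ring (A i)] [∀ i, Algebra ℂ (A i)]
    [∀ i, AddCommGroup (X i)] [∀ i, Module ℂ (X i)] [∀ i, Nontrivial (X i)]
    (Ψ : ∀ i, A i →ₐ[ℂ] Module.End ℂ (X i)) (hΨ : ∀ i, Function.Injective (Ψ i))
    (Θ : (⨂[ℂ] i, A i) →ₐ[ℂ] Module.End ℂ (⨂[ℂ] i, X i))
    (hΘ : ∀ (a : ∀ i, A i) (x : ∀ i, X i),
      Θ (PiTensorProduct.tprod ℂ a) (PiTensorProduct.tprod ℂ x) =
        PiTensorProduct.tprod ℂ (fun i => Ψ i (a i) (x i))) :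
    Function.Injective Θ :=
  piTensorProduct_faithful_module_general A X Ψ hΨ Θ hΘ
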